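/- Let T ≥ 1 be an integer, g > 0, and let (H, 𝒜) be a measurable space carrying two probability measures P₁, P₂ (the transcript laws of a bandit algorithm under the two environments). Let N₁ : H → ℕ be measurable with N₁(h) ≤ T for all h, set N₂(h) = T − N₁(h), and define the regret losses R₁(h) = g·N₂(h) (regret under environment 1) and R₂(h) = g·N₁(h) (regret under environment 2). Assume D_H²(P₁‖P₂) ≤ g²T/2. Then for every α ∈ [0,1): inf_{t ∈ ℝ} { t + (1/(1−α))·(½∫(R₁−t)₊ dP₁ + ½∫(R₂−t)₊ dP₂) } ≥ gT·Ψ_α(g√T). -/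

import Mathlib

/-!
Let `p, q` be the densities of `P₁, P₂` with respect to `P₁ + P₂` and `B = ∫ min p q` their
overlap (one minus the total variation distance). Since `R₁ + R₂ = gT`, pointwise
`(-t)₊ (p + q) + (gT - 2 t₊) min p q ≤ p (R₁ - t)₊ + q (R₂ - t)₊`, so the mean excess loss at
level `t` is at least `(-t)₊ + (gT - 2 t₊) B / 2`; minimizing over `t` bounds the CVaR below by
every `M ≤ gT / 2` with `2 (1 - α) M ≤ gT B`. Writing `|p - q| = |√p - √q| (√p + √q)` and using
AM-GM gives `1 - B ≤ √(2 D_H²) ≤ g√T`, and `gT Ψ_α(g√T)` satisfies both constraints.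
-/

open MeasureTheory

/-- Squared Hellinger divergence, computed with the dominating measure `P + Q`. -/
noncomputable def sqHellinger {X : Type*} [MeasurableSpace X] (P Q : Measure X) : ℝ :=
  1 - ∫ x, Real.sqrt ((P.rnDeriv (P + Q) x).toReal * (Q.rnDeriv (P + Q) x).toReal) ∂(P + Q)

/-- The function `Ψ_α` from the scalar minimization lemma. -/
noncomputable def Psi (α ρ : ℝ) : ℝ :=
  if α = 0 then (max (1 - ρ) 0) ^ 2 / 2
  else if ρ ≤ α then 1 / 2 - ρ ^ 2 / (2 * α)
  else if ρ ≤ 1 then (1 - ρ) ^ 2 / (2 * (1 - α))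
  else 0

lemma Psi_le_half {α ρ : ℝ} (hα₀ : 0 ≤ α) (hα₁ : α < 1) (hρ : 0 ≤ ρ) : Psi α ρ ≤ 1 / 2 := by
  unfold Psi
  split_ifs with hα hρα hρ1
  · have : max (1 - ρ) 0 ≤ 1 := max_le (by linarith) zero_le_one
    nlinarith [le_max_right (1 - ρ) 0]
  · have : 0 ≤ ρ ^ 2 / (2 * α) := by positivity
    linarith
  · rw [div_le_iff₀ (by linarith)]
    nlinarith
  · norm_num

lemma two_mul_one_sub_mul_Psi_le {α ρ : ℝ} (hα₀ : 0 ≤ α) (hα₁ : α < 1) (hρ : 0 ≤ ρ) :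
    2 * (1 - α) * Psi α ρ ≤ max (1 - ρ) 0 := by
  unfold Psi
  split_ifs with hα hρα hρ1
  · have : max (1 - ρ) 0 ≤ 1 := max_le (by linarith) zero_le_one
    subst hα
    nlinarith [le_max_right (1 - ρ) 0]
  · have hα : 0 < α := lt_of_le_of_ne hα₀ (Ne.symm hα)
    calc 2 * (1 - α) * (1 / 2 - ρ ^ 2 / (2 * α)) = 1 - ρ - ((α - ρ) + ρ ^ 2 * (1 - α) / α) := by
          field_simp; ring
      _ ≤ 1 - ρ := by
          have : 0 ≤ ρ ^ 2 * (1 - α) / α :=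
            div_nonneg (mul_nonneg (sq_nonneg ρ) (by linarith)) hα.le
          linarith
      _ ≤ max (1 - ρ) 0 := le_max_left _ _
  · calc 2 * (1 - α) * ((1 - ρ) ^ 2 / (2 * (1 - α))) = (1 - ρ) * (1 - ρ) := by
          field_simp [show 1 - α ≠ 0 by linarith]
      _ ≤ 1 - ρ := mul_le_of_le_one_left (by linarith) (by linarith)
      _ ≤ max (1 - ρ) 0 := le_max_left _ _
  · simp

lemma mul_sub_two_mul_min_le (a b c : ℝ) (ha : 0 ≤ a) (hb : 0 ≤ b) :
    2 * c * (a + b - 2 * min a b) ≤ c ^ 2 * (a + b - 2 * √(a * b)) + (a + b + 2 * √(a * b)) := by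
  obtain ⟨x, hx, rfl⟩ : ∃ x, 0 ≤ x ∧ x ^ 2 = a := ⟨√a, Real.sqrt_nonneg a, Real.sq_sqrt ha⟩
  obtain ⟨y, hy, rfl⟩ : ∃ y, 0 ≤ y ∧ y ^ 2 = b := ⟨√b, Real.sqrt_nonneg b, Real.sq_sqrt hb⟩
  have hxy : √(x ^ 2 * y ^ 2) = x * y := by
    rw [← mul_pow, Real.sqrt_sq (mul_nonneg hx hy)]
  -- `a + b - 2 min a b = |x - y| (x + y)`, so this is AM-GM for `c |x - y|` and `x + y`.
  have hmin : x ^ 2 + y ^ 2 - 2 * min (x ^ 2) (y ^ 2) = |x - y| * (x + y) := by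
    rcases le_total x y with h | h
    · rw [min_eq_left (pow_le_pow_left₀ hx h 2), abs_of_nonpos (by linarith)]; ring
    · rw [min_eq_right (pow_le_pow_left₀ hy h 2), abs_of_nonneg (by linarith)]; ring
  rw [hxy, hmin]
  have := two_mul_le_add_sq (c * |x - y|) (x + y)
  rw [mul_pow, sq_abs] at this
  linarith

lemma max_neg_mul_add_mul_min_le {a b r₁ r₂ : ℝ} (ha : 0 ≤ a) (hb : 0 ≤ b) (hr₁ : 0 ≤ r₁)
    (hr₂ : 0 ≤ r₂) (t : ℝ) :
    max (-t) 0 * (a + b) + (r₁ + r₂ - 2 * max t 0) * min a b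
      ≤ max (r₁ - t) 0 * a + max (r₂ - t) 0 * b := by
  have hma : min a b ≤ a := min_le_left a b
  have hmb : min a b ≤ b := min_le_right a b
  have hm : 0 ≤ min a b := le_min ha hb
  have h₁ := le_max_left (r₁ - t) 0
  have h₂ := le_max_left (r₂ - t) 0
  rcases le_total t 0 with ht | ht
  · rw [max_eq_right ht, max_eq_left (neg_nonneg.2 ht)]
    nlinarith [mul_le_mul_of_nonneg_left h₁ ha, mul_le_mul_of_nonneg_left h₂ hb,
      mul_le_mul_of_nonneg_left hma hr₁, mul_le_mul_of_nonneg_left hmb hr₂]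
  · rw [max_eq_left ht, max_eq_right (neg_nonpos.2 ht)]
    nlinarith [mul_le_mul_of_nonneg_right h₁ hm, mul_le_mul_of_nonneg_right h₂ hm,
      mul_le_mul_of_nonneg_left hma (le_max_right (r₁ - t) 0),
      mul_le_mul_of_nonneg_left hmb (le_max_right (r₂ - t) 0)]

lemma le_add_one_div_mul_of_le {α G B M t E : ℝ} (hα₀ : 0 ≤ α) (hα₁ : α < 1) (hMG : M ≤ G / 2)
    (hMB : 2 * (1 - α) * M ≤ G * B) (hE₀ : 0 ≤ E)
    (hE : max (-t) 0 + (G - 2 * max t 0) * B / 2 ≤ E) :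
    M ≤ t + 1 / (1 - α) * E := by
  have hα : 0 < 1 - α := by linarith
  suffices (1 - α) * (M - t) ≤ E by
    rw [one_div_mul_eq_div, ← sub_le_iff_le_add', le_div_iff₀ hα]
    linarith
  rcases le_total t 0 with ht | ht
  · rw [max_eq_left (neg_nonneg.2 ht), max_eq_right ht] at hE
    nlinarith [mul_nonneg hα₀ (neg_nonneg.2 ht)]
  rw [max_eq_right (neg_nonpos.2 ht), max_eq_left ht] at hE
  rcases le_total M t with hMt | hMt
  · nlinarith
  rcases le_total B (1 - α) with hB | hB
  · nlinarith [mul_nonneg ht (sub_nonneg.2 hB)]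
  · nlinarith [mul_nonneg (sub_nonneg.2 hB) (by linarith : 0 ≤ G / 2 - t),
      mul_nonneg hα.le (sub_nonneg.2 hMG)]

section Measures

variable {X : Type*} [MeasurableSpace X]

section Densities

variable {ν : Measure X} {p q : X → ℝ}

lemma integrable_sqrt_mul (hp : ∀ x, 0 ≤ p x) (hq : ∀ x, 0 ≤ q x) (hpi : Integrable p ν)
    (hqi : Integrable q ν) : Integrable (fun x ↦ √(p x * q x)) ν := by
  refine ((hpi.add hqi).div_const 2).mono' (Real.continuous_sqrt.comp_aestronglyMeasurable
    (hpi.aestronglyMeasurable.mul hqi.aestronglyMeasurable)) (ae_of_all _ fun x ↦ ?_)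
  rw [Real.norm_of_nonneg (Real.sqrt_nonneg _), Real.sqrt_le_iff, Pi.add_apply]
  constructor
  · linarith [hp x, hq x]
  · nlinarith [sq_nonneg (p x - q x)]

lemma integrable_min (hp : ∀ x, 0 ≤ p x) (hq : ∀ x, 0 ≤ q x) (hpi : Integrable p ν)
    (hqi : Integrable q ν) : Integrable (fun x ↦ min (p x) (q x)) ν :=
  hpi.mono' (hpi.aestronglyMeasurable.inf hqi.aestronglyMeasurable) (ae_of_all _ fun x ↦ by
    rw [Real.norm_of_nonneg (le_min (hp x) (hq x))]; exact min_le_left _ _)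

lemma integral_mul_add_add_mul (hpi : Integrable p ν) (hqi : Integrable q ν)
    (hp₁ : ∫ x, p x ∂ν = 1) (hq₁ : ∫ x, q x ∂ν = 1) {f : X → ℝ} (hf : Integrable f ν) (k₁ k₂ : ℝ) :
    ∫ x, (k₁ * (p x + q x) + k₂ * f x) ∂ν = 2 * k₁ + k₂ * ∫ x, f x ∂ν := by
  rw [integral_add (f := fun x ↦ k₁ * (p x + q x)) ((hpi.add hqi).const_mul k₁) (hf.const_mul k₂),
    integral_const_mul, integral_const_mul, integral_add hpi hqi, hp₁, hq₁]
  ring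

/-- This is `TV ≤ √(2 H²)`; integrate `mul_sub_two_mul_min_le` with `c = 2 / ρ`. -/
lemma one_sub_le_integral_min (hp : ∀ x, 0 ≤ p x) (hq : ∀ x, 0 ≤ q x) (hpi : Integrable p ν)
    (hqi : Integrable q ν) (hp₁ : ∫ x, p x ∂ν = 1) (hq₁ : ∫ x, q x ∂ν = 1) {ρ : ℝ} (hρ : 0 < ρ)
    (hH : 1 - ∫ x, √(p x * q x) ∂ν ≤ ρ ^ 2 / 2) :
    1 - ρ ≤ ∫ x, min (p x) (q x) ∂ν := by
  have hmi := integrable_min hp hq hpi hqi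
  have hsi := integrable_sqrt_mul hp hq hpi hqi
  have hS : ∫ x, √(p x * q x) ∂ν ≤ 1 := by
    have := integral_mono hsi ((hpi.add hqi).div_const 2) fun x ↦ by
      rw [Real.sqrt_le_iff, Pi.add_apply]
      exact ⟨by linarith [hp x, hq x], by nlinarith [sq_nonneg (p x - q x)]⟩
    rwa [integral_div, integral_add' hpi hqi, hp₁, hq₁, one_add_one_eq_two,
      div_self two_ne_zero] at this
  set c := 2 / ρ
  have hmono := integral_mono
    (f := fun x ↦ 2 * c * (p x + q x) + -(4 * c) * min (p x) (q x))
    (g := fun x ↦ (c ^ 2 + 1) * (p x + q x) + (2 - 2 * c ^ 2) * √(p x * q x))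
    (by exact ((hpi.add hqi).const_mul _).add (hmi.const_mul _))
    (by exact ((hpi.add hqi).const_mul _).add (hsi.const_mul _)) fun x ↦ by
      have := mul_sub_two_mul_min_le (p x) (q x) c (hp x) (hq x)
      dsimp only
      linarith
  rw [integral_mul_add_add_mul hpi hqi hp₁ hq₁ hmi,
    integral_mul_add_add_mul hpi hqi hp₁ hq₁ hsi] at hmono
  have hcρ : c * ρ = 2 := div_mul_cancel₀ 2 hρ.ne'
  have hcH : c ^ 2 * (1 - ∫ x, √(p x * q x) ∂ν) ≤ 2 := by
    calc _ ≤ c ^ 2 * (ρ ^ 2 / 2) := mul_le_mul_of_nonneg_left hH (sq_nonneg c)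
      _ = (c * ρ) ^ 2 / 2 := by ring
      _ = 2 := by rw [hcρ]; norm_num
  have : c * (1 - ∫ x, min (p x) (q x) ∂ν) ≤ 2 := by nlinarith
  nlinarith

lemma le_integral_mul_max_sub_add_integral_mul_max_sub (hp : ∀ x, 0 ≤ p x)
    (hq : ∀ x, 0 ≤ q x) (hpi : Integrable p ν) (hqi : Integrable q ν) (hp₁ : ∫ x, p x ∂ν = 1)
    (hq₁ : ∫ x, q x ∂ν = 1) {R₁ R₂ : X → ℝ} {G : ℝ} (hR₁ : ∀ x, 0 ≤ R₁ x) (hR₂ : ∀ x, 0 ≤ R₂ x)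
    (hsum : ∀ x, R₁ x + R₂ x = G) (t : ℝ) (hF₁ : Integrable (fun x ↦ p x * max (R₁ x - t) 0) ν)
    (hF₂ : Integrable (fun x ↦ q x * max (R₂ x - t) 0) ν) :
    2 * max (-t) 0 + (G - 2 * max t 0) * ∫ x, min (p x) (q x) ∂ν
      ≤ ∫ x, p x * max (R₁ x - t) 0 ∂ν + ∫ x, q x * max (R₂ x - t) 0 ∂ν := by
  have hmi := integrable_min hp hq hpi hqi
  rw [← integral_mul_add_add_mul hpi hqi hp₁ hq₁ hmi, ← integral_add hF₁ hF₂]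
  refine integral_mono (by exact ((hpi.add hqi).const_mul _).add (hmi.const_mul _))
    (hF₁.add hF₂) fun x ↦ ?_
  have := max_neg_mul_add_mul_min_le (hp x) (hq x) (hR₁ x) (hR₂ x) t
  rw [hsum x] at this
  dsimp only [Pi.add_apply]
  linarith

end Densities

/-- `∫ min (dP/dλ) (dQ/dλ) dλ = 1 - TV(P, Q)`. -/
noncomputable def overlap (P Q : Measure X) : ℝ :=
  ∫ x, min (P.rnDeriv (P + Q) x).toReal (Q.rnDeriv (P + Q) x).toReal ∂(P + Q)

lemma overlap_nonneg (P Q : Measure X) : 0 ≤ overlap P Q :=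
  integral_nonneg fun _ ↦ le_min ENNReal.toReal_nonneg ENNReal.toReal_nonneg

noncomputable def meanExcess (P₁ P₂ : Measure X) (R₁ R₂ : X → ℝ)
    (t : ℝ) : ℝ :=
  (1 / 2) * (∫ x, max (R₁ x - t) 0 ∂P₁) + (1 / 2) * (∫ x, max (R₂ x - t) 0 ∂P₂)

lemma meanExcess_nonneg (P₁ P₂ : Measure X) (R₁ R₂ : X → ℝ)
    (t : ℝ) : 0 ≤ meanExcess P₁ P₂ R₁ R₂ t := by
  have h₁ : 0 ≤ ∫ x, max (R₁ x - t) 0 ∂P₁ := integral_nonneg fun _ ↦ le_max_right _ _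
  have h₂ : 0 ≤ ∫ x, max (R₂ x - t) 0 ∂P₂ := integral_nonneg fun _ ↦ le_max_right _ _
  unfold meanExcess
  positivity

noncomputable def twoPointCVaR (α : ℝ) (P₁ P₂ : Measure X)
    (R₁ R₂ : X → ℝ) : ℝ :=
  ⨅ t : ℝ, t + 1 / (1 - α) * meanExcess P₁ P₂ R₁ R₂ t

lemma integrable_max_sub_of_le {μ : Measure X} [IsFiniteMeasure μ]
    {R : X → ℝ} {G : ℝ} (hR : Measurable R) (hRG : ∀ x, R x ≤ G) (t : ℝ) :
    Integrable (fun x ↦ max (R x - t) 0) μ :=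
  .of_bound ((hR.sub_const t).max measurable_const).aestronglyMeasurable (max (G - t) 0)
    (ae_of_all _ fun x ↦ by
      rw [Real.norm_of_nonneg (le_max_right _ _)]
      exact max_le_max_right 0 (by linarith [hRG x]))

lemma integral_toReal_rnDeriv_eq_one {μ ν : Measure X}
    [IsProbabilityMeasure μ] [SigmaFinite ν] (hμν : μ ≪ ν) : ∫ x, (μ.rnDeriv ν x).toReal ∂ν = 1 := by
  rw [Measure.integral_toReal_rnDeriv hμν, probReal_univ]

section ProbabilityMeasures

variable (P Q : Measure X) [IsProbabilityMeasure P] [IsProbabilityMeasure Q]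

lemma one_sub_le_overlap {ρ : ℝ} (hρ : 0 < ρ) (hH : sqHellinger P Q ≤ ρ ^ 2 / 2) :
    1 - ρ ≤ overlap P Q :=
  one_sub_le_integral_min (fun _ ↦ ENNReal.toReal_nonneg) (fun _ ↦ ENNReal.toReal_nonneg)
    Measure.integrable_toReal_rnDeriv Measure.integrable_toReal_rnDeriv
    (integral_toReal_rnDeriv_eq_one (Measure.AbsolutelyContinuous.rfl.add_right Q))
    (integral_toReal_rnDeriv_eq_one (Measure.AbsolutelyContinuous.rfl.add_right' P)) hρ hH

lemma le_meanExcess {R₁ R₂ : X → ℝ} {G : ℝ} (hR₁ : Measurable R₁) (hR₂ : Measurable R₂)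
    (hR₁₀ : ∀ x, 0 ≤ R₁ x) (hR₂₀ : ∀ x, 0 ≤ R₂ x) (hsum : ∀ x, R₁ x + R₂ x = G) (t : ℝ) :
    max (-t) 0 + (G - 2 * max t 0) * overlap P Q / 2 ≤ meanExcess P Q R₁ R₂ t := by
  have hP : P ≪ P + Q := Measure.AbsolutelyContinuous.rfl.add_right Q
  have hQ : Q ≪ P + Q := Measure.AbsolutelyContinuous.rfl.add_right' P
  have hF₁ := (integrable_toReal_rnDeriv_mul_iff hP).2
    (integrable_max_sub_of_le hR₁ (fun x ↦ by linarith [hR₂₀ x, hsum x]) t)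
  have hF₂ := (integrable_toReal_rnDeriv_mul_iff hQ).2
    (integrable_max_sub_of_le hR₂ (fun x ↦ by linarith [hR₁₀ x, hsum x]) t)
  have := le_integral_mul_max_sub_add_integral_mul_max_sub (fun _ ↦ ENNReal.toReal_nonneg)
    (fun _ ↦ ENNReal.toReal_nonneg) Measure.integrable_toReal_rnDeriv
    Measure.integrable_toReal_rnDeriv (integral_toReal_rnDeriv_eq_one hP)
    (integral_toReal_rnDeriv_eq_one hQ) hR₁₀ hR₂₀ hsum t hF₁ hF₂
  rw [integral_toReal_rnDeriv_mul hP, integral_toReal_rnDeriv_mul hQ] at this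
  unfold meanExcess overlap
  linarith

lemma le_twoPointCVaR {α G M : ℝ} (hα₀ : 0 ≤ α) (hα₁ : α < 1) {R₁ R₂ : X → ℝ}
    (hR₁ : Measurable R₁) (hR₂ : Measurable R₂) (hR₁₀ : ∀ x, 0 ≤ R₁ x) (hR₂₀ : ∀ x, 0 ≤ R₂ x)
    (hsum : ∀ x, R₁ x + R₂ x = G) (hMG : M ≤ G / 2) (hMB : 2 * (1 - α) * M ≤ G * overlap P Q) :
    M ≤ twoPointCVaR α P Q R₁ R₂ :=
  le_ciInf fun t ↦ le_add_one_div_mul_of_le hα₀ hα₁ hMG hMB (meanExcess_nonneg P Q R₁ R₂ t)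
    (le_meanExcess P Q hR₁ hR₂ hR₁₀ hR₂₀ hsum t)

end ProbabilityMeasures

end Measures

theorem two_armed_gaussian_bandit_cvar
    (T : ℕ) (hT : 1 ≤ T) (g : ℝ) (hg : 0 < g)
    {H : Type*} [MeasurableSpace H]
    (P₁ P₂ : Measure H) [IsProbabilityMeasure P₁] [IsProbabilityMeasure P₂]
    (N₁ : H → ℕ) (hN₁ : Measurable N₁) (hN₁T : ∀ h, N₁ h ≤ T)
    (hHell : sqHellinger P₁ P₂ ≤ g ^ 2 * T / 2)
    (α : ℝ) (hα : α ∈ Set.Ico (0 : ℝ) 1) :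
    (⨅ t : ℝ, t + (1 / (1 - α)) *
        ((1 / 2) * (∫ h, max (g * ((T : ℝ) - (N₁ h : ℝ)) - t) 0 ∂P₁)
          + (1 / 2) * (∫ h, max (g * (N₁ h : ℝ) - t) 0 ∂P₂))) ≥
    g * T * Psi α (g * Real.sqrt T) := by
  obtain ⟨hα₀, hα₁⟩ := hα
  have hT₀ : (0 : ℝ) < T := by exact_mod_cast hT
  have hρ : 0 < g * √T := by positivity
  have hoverlap : max (1 - g * √T) 0 ≤ overlap P₁ P₂ := by
    refine max_le (one_sub_le_overlap P₁ P₂ hρ ?_) (overlap_nonneg P₁ P₂)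
    rwa [mul_pow, Real.sq_sqrt hT₀.le]
  have hG : 0 ≤ g * T := by positivity
  have hN : Measurable fun h ↦ (N₁ h : ℝ) := measurable_from_top.comp hN₁
  have hNT : ∀ h, (N₁ h : ℝ) ≤ T := fun h ↦ by exact_mod_cast hN₁T h
  refine le_twoPointCVaR P₁ P₂ (R₁ := fun h ↦ g * ((T : ℝ) - N₁ h)) (R₂ := fun h ↦ g * N₁ h)
    (G := g * T) hα₀ hα₁ ((measurable_const.sub hN).const_mul g) (hN.const_mul g)
    (fun h ↦ mul_nonneg hg.le (sub_nonneg.2 (hNT h))) (fun h ↦ by positivity) (fun h ↦ by ring)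
    ?_ ?_
  · calc g * T * Psi α (g * √T) ≤ g * T * (1 / 2) :=
          mul_le_mul_of_nonneg_left (Psi_le_half hα₀ hα₁ hρ.le) hG
      _ = g * T / 2 := by ring
  · calc 2 * (1 - α) * (g * T * Psi α (g * √T)) = g * T * (2 * (1 - α) * Psi α (g * √T)) := by
          ring
      _ ≤ g * T * overlap P₁ P₂ :=
          mul_le_mul_of_nonneg_left ((two_mul_one_sub_mul_Psi_le hα₀ hα₁ hρ.le).trans hoverlap) hG
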